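/- arXiv:1309.0498 — 4 statements merged into one kernel-verified Lean document; each statement's English description precedes it below -/
import Mathlib

section
/- If a selfadjoint element a of a C*-algebra A is a sum of m commutators [x_i, y_i] (with x_i, y_i ∈ A), then a is a sum of 2m self-commutators, i.e., elements of the form [z*, z]. -/
lemma key_unscaled {A : Type*} [NonUnitalCStarAlgebra A] (x y : A) :
    (star (x - star y) * (x - star y) - (x - star y) * star (x - star y))
      + (star (star x + y) * (star x + y) - (star x + y) * star (star x + y))
    = (2 : ℂ) • ((x * y - y * x) + star (x * y - y * x)) := by
  simp only [star_sub, star_add, star_star, star_mul, two_smul]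
  noncomm_ring

lemma key_scaled {A : Type*} [NonUnitalCStarAlgebra A] (x y : A) :
    (star ((1/2 : ℂ) • (x - star y)) * ((1/2 : ℂ) • (x - star y))
      - ((1/2 : ℂ) • (x - star y)) * star ((1/2 : ℂ) • (x - star y)))
      + (star ((1/2 : ℂ) • (star x + y)) * ((1/2 : ℂ) • (star x + y))
      - ((1/2 : ℂ) • (star x + y)) * star ((1/2 : ℂ) • (star x + y)))
    = (1/2 : ℂ) • ((x * y - y * x) + star (x * y - y * x)) := by
  have h := key_unscaled x y
  simp only [star_smul, RCLike.star_def, map_div₀, map_one, map_ofNat,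
    smul_mul_smul_comm, ← smul_sub, ← smul_add]
  rw [h, smul_smul]
  norm_num

/-- If a selfadjoint element `a` of a C*-algebra `A` is a sum of `m` commutators
`[xᵢ, yᵢ]`, then `a` is a sum of `2 * m` self-commutators `[zᵢ*, zᵢ]`. -/
theorem selfadjoint_sum_commutators_eq_sum_self_commutators
    {A : Type*} [NonUnitalCStarAlgebra A] (m : ℕ) (a : A)
    (ha : IsSelfAdjoint a) (x y : Fin m → A)
    (hsum : a = ∑ i, (x i * y i - y i * x i)) :
    ∃ z : Fin (2 * m) → A, a = ∑ i, (star (z i) * z i - z i * star (z i)) := by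
  classical
  set e : Fin m ⊕ Fin m ≃ Fin (2 * m) :=
    finSumFinEquiv.trans (finCongr (two_mul m).symm) with he
  refine ⟨(Sum.elim (fun i => (1/2 : ℂ) • (x i - star (y i)))
      (fun i => (1/2 : ℂ) • (star (x i) + y i))) ∘ e.symm, ?_⟩
  have hsum2 : ∀ (f : Fin m ⊕ Fin m → A),
      (∑ i : Fin (2*m), (star ((f ∘ e.symm) i) * ((f ∘ e.symm) i)
        - ((f ∘ e.symm) i) * star ((f ∘ e.symm) i)))
      = ∑ j : Fin m ⊕ Fin m, (star (f j) * f j - f j * star (f j)) := by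
    intro f
    exact Equiv.sum_comp e.symm (fun j => star (f j) * f j - f j * star (f j))
  rw [hsum2, Fintype.sum_sum_type, ← Finset.sum_add_distrib]
  simp only [Sum.elim_inl, Sum.elim_inr]
  calc a = (1/2 : ℂ) • (a + star a) := by
        rw [ha.star_eq, ← two_smul ℂ a, smul_smul]; norm_num
    _ = (1/2 : ℂ) • ((∑ i, (x i * y i - y i * x i)) + star (∑ i, (x i * y i - y i * x i))) := by
        rw [← hsum]
    _ = ∑ i, (1/2 : ℂ) • ((x i * y i - y i * x i) + star (x i * y i - y i * x i)) := by
        rw [star_sum, ← Finset.sum_add_distrib, Finset.smul_sum]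
    _ = _ := by
        refine Finset.sum_congr rfl fun i _ => ?_
        exact (key_scaled (x i) (y i)).symm
end

section
/- Let A be a C*-algebra and a, b ∈ A positive. Then a is Cuntz below b (a ≾ b, i.e., there exist d_n with d_n* b d_n → a in norm) if and only if for each ε > 0 there exists x ∈ A such that (a − ε)₊ = x*x and xx* belongs to the hereditary subalgebra generated by b. -/
open Filter Topology

variable {A : Type*} [NonUnitalCStarAlgebra A] [PartialOrder A] [StarOrderedRing A]

/-- Cuntz subequivalence: `a ≾ b` iff `dₙ* b dₙ → a` in norm for some sequence `dₙ`. -/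
def CuntzLE (a b : A) : Prop :=
  ∃ d : ℕ → A, Tendsto (fun n => star (d n) * b * (d n)) atTop (nhds a)

/-- The hereditary subalgebra generated by `b`, i.e. the closure of `bAb`. -/
def her (b : A) : Set A := closure {x | ∃ y : A, x = b * y * b}

/-! The direction `⇐` is a chain of elementary Cuntz comparisons: `(a - ε)₊ = x⋆x ≾ (x⋆x)² =
x⋆(xx⋆)x ≾ xx⋆ ≾ b`, where the last step holds because positive elements of `her b` lie in the
closed right ideal generated by `√b`; then let `ε → 0`. For `⇒`, pick `d` with `‖a - d⋆bd‖ < ε`.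
With `h = (a - ε)₊^(1/2)` one gets `δ h² ≤ h d⋆bd h` for `δ = ε - ‖a - d⋆bd‖ > 0`, i.e.
`h² ≤ w⋆w` with `w = δ^(-1/2) √b d h`. Such a domination is upgraded to an exact factorisation
`h² = x⋆x` with `x = lim w (w⋆w + s)^(-1/2) h ∈ closure (bA)`, whence `xx⋆ ∈ her b`. -/

lemma abs_mul_sqrt_mul_inv_add_sub_sqrt_le {t s : ℝ} (ht : 0 ≤ t) (hs : 0 < s) :
    |t * (√t * (t + s)⁻¹) - √t| ≤ √s := by
  have hts : 0 < t + s := by positivity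
  have hamgm : 2 * (√t * √s) ≤ t + s := by
    nlinarith [sq_nonneg (√t - √s), Real.sq_sqrt ht, Real.sq_sqrt hs.le]
  have heq : t * (√t * (t + s)⁻¹) - √t = -(√s * (√t * √s) / (t + s)) := by
    field_simp
    rw [Real.sq_sqrt hs.le]
    ring
  rw [heq, abs_neg, abs_of_nonneg (by positivity), div_le_iff₀ hts]
  nlinarith [Real.sqrt_nonneg s]

lemma abs_max_sub_sub_self_le {t ε : ℝ} (ht : 0 ≤ t) (hε : 0 ≤ ε) : |max (t - ε) 0 - t| ≤ ε := by
  rw [abs_le]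
  constructor <;> cases max_cases (t - ε) 0 <;> linarith

lemma inv_sqrt_add_sub_inv_sqrt_add_mul_le {t s s' : ℝ} (ht : 0 ≤ t) (hs : 0 < s) (hss' : s ≤ s') :
    ((√(t + s))⁻¹ - (√(t + s'))⁻¹) * t ≤ √s' := by
  set α := √(t + s)
  set β := √(t + s')
  have hα : 0 < α := Real.sqrt_pos.2 (by linarith)
  have hαβ : α ≤ β := Real.sqrt_le_sqrt (by linarith)
  have hβ : 0 < β := hα.trans_le hαβ
  have htαβ : t ≤ α * β := by
    calc t = √t * √t := (Real.mul_self_sqrt ht).symm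
      _ ≤ α * β := mul_le_mul (Real.sqrt_le_sqrt (by linarith)) (Real.sqrt_le_sqrt (by linarith))
          (Real.sqrt_nonneg t) hα.le
  have hβα : β ≤ α + √s' := by
    have hα2 := Real.mul_self_sqrt (show 0 ≤ t + s by linarith)
    have hβ2 := Real.mul_self_sqrt (show 0 ≤ t + s' by linarith)
    have hs'2 := Real.mul_self_sqrt (show 0 ≤ s' by linarith)
    nlinarith [Real.sqrt_nonneg s', Real.sqrt_nonneg (t + s')]
  calc (α⁻¹ - β⁻¹) * t = (β - α) * (t / (α * β)) := by field_simp
    _ ≤ (β - α) * 1 := by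
        gcongr
        exact div_le_one_of_le₀ htαβ (by positivity)
    _ ≤ √s' := by linarith

lemma sq_inv_sqrt_add_sub_inv_sqrt_add_mul_le {t s s' : ℝ} (ht : 0 ≤ t) (hs : 0 < s)
    (hs' : 0 < s') :
    (((√(t + s))⁻¹ - (√(t + s'))⁻¹) * t) ^ 2 ≤ max s s' := by
  wlog hss' : s ≤ s' generalizing s s'
  · rw [max_comm, ← neg_sq, ← neg_mul, neg_sub]
    exact this hs' hs (le_of_not_ge hss')
  have hnonneg : 0 ≤ ((√(t + s))⁻¹ - (√(t + s'))⁻¹) * t :=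
    mul_nonneg (sub_nonneg.2 (inv_anti₀ (Real.sqrt_pos.2 (by linarith))
      (Real.sqrt_le_sqrt (by linarith)))) ht
  calc _ ≤ √s' ^ 2 := pow_le_pow_left₀ hnonneg (inv_sqrt_add_sub_inv_sqrt_add_mul_le ht hs hss') 2
    _ = s' := Real.sq_sqrt hs'.le
    _ = max s s' := (max_eq_right hss').symm

section Cuntz

omit [PartialOrder A] [StarOrderedRing A]

lemma cuntzLE_iff_mem_closure {a b : A} :
    CuntzLE a b ↔ a ∈ closure (Set.range fun d : A => star d * b * d) := by
  rw [mem_closure_iff_seq_limit]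
  constructor
  · rintro ⟨d, hd⟩
    exact ⟨_, fun n => ⟨d n, rfl⟩, hd⟩
  · rintro ⟨f, hf, hlim⟩
    choose d hd using hf
    exact ⟨d, by simpa only [hd] using hlim⟩

lemma cuntzLE_star_mul_mul (b d : A) : CuntzLE (star d * b * d) b :=
  ⟨fun _ => d, tendsto_const_nhds⟩

lemma cuntzLE_of_tendsto {ι : Type*} {l : Filter ι} [l.NeBot] {f : ι → A} {a b : A}
    (hf : Tendsto f l (𝓝 a)) (hfb : ∀ᶠ i in l, CuntzLE (f i) b) : CuntzLE a b := by
  simp only [cuntzLE_iff_mem_closure] at hfb ⊢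
  exact isClosed_closure.mem_of_tendsto hf hfb

lemma CuntzLE.trans {a b c : A} (hab : CuntzLE a b) (hbc : CuntzLE b c) : CuntzLE a c := by
  rw [cuntzLE_iff_mem_closure] at hab hbc ⊢
  refine closure_minimal ?_ isClosed_closure hab
  rintro _ ⟨d, rfl⟩
  refine map_mem_closure (f := fun y => star d * y * d) (by fun_prop) hbc ?_
  rintro _ ⟨e, rfl⟩
  exact ⟨e * d, by simp only [star_mul, mul_assoc]⟩

lemma mul_mem_closure_range_mul {b y : A} (hy : y ∈ closure (Set.range (b * ·))) (z : A) :
    y * z ∈ closure (Set.range (b * ·)) :=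
  map_mem_closure (f := (· * z)) (continuous_mul_const z) hy <| Set.forall_mem_range.2 fun u =>
    ⟨u * z, (mul_assoc b u z).symm⟩

lemma closure_range_mul_subset {b y : A} (hy : y ∈ closure (Set.range (b * ·))) :
    closure (Set.range (y * ·)) ⊆ closure (Set.range (b * ·)) :=
  closure_minimal (Set.range_subset_iff.2 (mul_mem_closure_range_mul hy)) isClosed_closure

lemma cuntzLE_star_mul_self_of_mem_closure {c x : A} (hc : IsSelfAdjoint c)
    (hx : x ∈ closure (Set.range (c * ·))) : CuntzLE (star x * x) (c * c) := by
  rw [cuntzLE_iff_mem_closure]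
  refine map_mem_closure (f := fun y => star y * y) (by fun_prop) hx ?_
  rintro _ ⟨u, rfl⟩
  exact ⟨u, by simp only [star_mul, hc.star_eq, mul_assoc]⟩

lemma mul_star_mem_her_of_mem_closure {b x : A} (hb : IsSelfAdjoint b)
    (hx : x ∈ closure (Set.range (b * ·))) : x * star x ∈ her b := by
  refine map_mem_closure (f := fun y => y * star y) (by fun_prop) hx ?_
  rintro _ ⟨u, rfl⟩
  exact ⟨u * star u, by simp only [star_mul, hb.star_eq, mul_assoc]⟩

lemma her_subset_closure_range_mul {b c : A} (hcb : c * c = b) :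
    her b ⊆ closure (Set.range (c * ·)) :=
  closure_mono fun _ ⟨u, hu⟩ => ⟨c * u * b, by rw [hu, ← hcb, mul_assoc, mul_assoc, mul_assoc]⟩

end Cuntz

local notation "σₙ" => quasispectrum

section Calculus

omit [PartialOrder A] [StarOrderedRing A] in
lemma norm_cfcₙ_sub_cfcₙ_le {f g : ℝ → ℝ} {a : A} {c : ℝ} (hf : ContinuousOn f (σₙ ℝ a))
    (hf0 : f 0 = 0) (hg : ContinuousOn g (σₙ ℝ a)) (hg0 : g 0 = 0)
    (hfg : ∀ t ∈ σₙ ℝ a, |f t - g t| ≤ c) : ‖cfcₙ f a - cfcₙ g a‖ ≤ c := by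
  rw [← cfcₙ_sub f g a]
  exact norm_cfcₙ_le hfg

lemma continuousOn_sqrt_mul_inv_add {a : A} (ha : 0 ≤ a) {s : ℝ} (hs : 0 < s) :
    ContinuousOn (fun t => √t * (t + s)⁻¹) (σₙ ℝ a) :=
  Real.continuous_sqrt.continuousOn.mul <| (continuousOn_id.add continuousOn_const).inv₀
    fun t ht => (add_pos_of_nonneg_of_pos (quasispectrum_nonneg_of_nonneg a ha t ht) hs).ne'

lemma sqrt_mem_closure_range_mul {a : A} (ha : 0 ≤ a) :
    CFC.sqrt a ∈ closure (Set.range (a * ·)) := by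
  refine Metric.mem_closure_iff.2 fun ε hε => ?_
  set s := (ε / 2) ^ 2
  have hs : 0 < s := by positivity
  have hg := continuousOn_sqrt_mul_inv_add ha hs
  refine ⟨a * cfcₙ (fun t => √t * (t + s)⁻¹) a, ⟨_, rfl⟩, ?_⟩
  have hmul : a * cfcₙ (fun t => √t * (t + s)⁻¹) a = cfcₙ (fun t => t * (√t * (t + s)⁻¹)) a := by
    rw [cfcₙ_mul (fun t => t) _ a continuousOn_id rfl hg (by simp), cfcₙ_id' ℝ a]
  rw [dist_comm, dist_eq_norm, hmul, CFC.sqrt_eq_real_sqrt a]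
  calc _ ≤ √s := norm_cfcₙ_sub_cfcₙ_le (continuousOn_id.mul hg) (by simp)
        Real.continuous_sqrt.continuousOn Real.sqrt_zero fun t ht =>
        abs_mul_sqrt_mul_inv_add_sub_sqrt_le (quasispectrum_nonneg_of_nonneg a ha t ht) hs
    _ < ε := by rw [Real.sqrt_sq (by positivity)]; linarith

lemma cuntzLE_mul_self {a : A} (ha : 0 ≤ a) : CuntzLE a (a * a) := by
  have := cuntzLE_star_mul_self_of_mem_closure ha.isSelfAdjoint (sqrt_mem_closure_range_mul ha)
  rwa [(CFC.sqrt_nonneg a).isSelfAdjoint.star_eq, CFC.sqrt_mul_sqrt_self a] at this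

lemma cuntzLE_of_mem_her {b y : A} (hb : 0 ≤ b) (hy : 0 ≤ y) (hyb : y ∈ her b) : CuntzLE y b := by
  have := cuntzLE_star_mul_self_of_mem_closure (CFC.sqrt_nonneg b).isSelfAdjoint
    (her_subset_closure_range_mul (CFC.sqrt_mul_sqrt_self b) hyb)
  rw [hy.isSelfAdjoint.star_eq, CFC.sqrt_mul_sqrt_self b] at this
  exact (cuntzLE_mul_self hy).trans this

lemma cuntzLE_star_mul_self_of_mul_star_mem_her {b x : A} (hb : 0 ≤ b)
    (hx : x * star x ∈ her b) : CuntzLE (star x * x) b := by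
  have hsq : star x * x * (star x * x) = star x * (x * star x) * x := by simp only [mul_assoc]
  refine (cuntzLE_mul_self (star_mul_self_nonneg x)).trans ?_
  rw [hsq]
  exact (cuntzLE_star_mul_mul _ x).trans (cuntzLE_of_mem_her hb (mul_star_self_nonneg x) hx)

lemma tendsto_cfcₙ_max_sub_nhdsGT_zero {a : A} (ha : 0 ≤ a) :
    Tendsto (fun ε : ℝ => cfcₙ (fun t : ℝ => max (t - ε) 0) a) (𝓝[>] 0) (𝓝 a) := by
  rw [tendsto_iff_norm_sub_tendsto_zero]
  refine squeeze_zero' (Eventually.of_forall fun _ => norm_nonneg _)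
    (eventually_mem_nhdsWithin.mono fun ε (hε : 0 < ε) => ?_)
    (tendsto_nhdsWithin_of_tendsto_nhds tendsto_id)
  have h := norm_cfcₙ_sub_cfcₙ_le (g := fun t => t) (by fun_prop) (by simp [hε.le])
    continuousOn_id rfl fun t ht =>
      abs_max_sub_sub_self_le (quasispectrum_nonneg_of_nonneg a ha t ht) hε.le
  rwa [cfcₙ_id' ℝ a] at h

end Calculus

section Cutdown

variable {a : A} {ε : ℝ}

omit [PartialOrder A] [StarOrderedRing A]

lemma cfcₙ_sqrt_max_sub_mul_self (hε : 0 ≤ ε) :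
    cfcₙ (fun t : ℝ => √(max (t - ε) 0)) a * cfcₙ (fun t : ℝ => √(max (t - ε) 0)) a =
      cfcₙ (fun t : ℝ => max (t - ε) 0) a := by
  rw [← cfcₙ_mul _ _ a (by fun_prop) (by simp [hε]) (by fun_prop) (by simp [hε])]
  exact cfcₙ_congr fun t _ => Real.mul_self_sqrt (le_max_right _ _)

lemma cfcₙ_sqrt_max_sub_mul_mul (ha : IsSelfAdjoint a) (hε : 0 ≤ ε) :
    cfcₙ (fun t : ℝ => √(max (t - ε) 0)) a * a * cfcₙ (fun t : ℝ => √(max (t - ε) 0)) a =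
      cfcₙ (fun t : ℝ => max (t - ε) 0) a * cfcₙ (fun t : ℝ => max (t - ε) 0) a +
        ε • cfcₙ (fun t : ℝ => max (t - ε) 0) a := by
  have hF0 : max ((0 : ℝ) - ε) 0 = 0 := by simp [hε]
  calc _ = cfcₙ (fun t : ℝ => √(max (t - ε) 0) * t * √(max (t - ε) 0)) a := by
        rw [cfcₙ_mul (fun t : ℝ => √(max (t - ε) 0) * t) _ a (by fun_prop) (by simp)
          (by fun_prop) (by simp [hε]),
          cfcₙ_mul _ (fun t : ℝ => t) a (by fun_prop) (by simp [hε]), cfcₙ_id' ℝ a]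
    _ = cfcₙ (fun t : ℝ => max (t - ε) 0 * max (t - ε) 0 + ε • max (t - ε) 0) a := by
        refine cfcₙ_congr fun t _ => ?_
        rw [mul_right_comm, Real.mul_self_sqrt (le_max_right _ _), smul_eq_mul]
        rcases le_total (t - ε) 0 with h | h
        · simp [max_eq_right h]
        · rw [max_eq_left h]; ring
    _ = _ := by
        rw [cfcₙ_add _ _ a (by fun_prop) (by simp [hε]) (by fun_prop) (by simp [hε]),
          cfcₙ_mul (fun t : ℝ => max (t - ε) 0) (fun t : ℝ => max (t - ε) 0) a (by fun_prop) hF0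
            (by fun_prop) hF0, cfcₙ_smul ε (fun t : ℝ => max (t - ε) 0) a (by fun_prop) hF0]

end Cutdown

lemma smul_mul_self_le_mul_mul {a c h : A} (hh : IsSelfAdjoint h) (hac : IsSelfAdjoint (a - c))
    {ε : ℝ} (hhah : h * a * h = h * h * (h * h) + ε • (h * h)) :
    (ε - ‖a - c‖) • (h * h) ≤ h * c * h := by
  have hsq : 0 ≤ h * h * (h * h) := hh.mul_self_nonneg.isSelfAdjoint.mul_self_nonneg
  have hle : h * (a - c) * h ≤ ‖a - c‖ • (h * h) := by
    simpa only [hh.star_eq] using CStarAlgebra.star_left_conjugate_le_norm_smul (a := h) hac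
  calc (ε - ‖a - c‖) • (h * h) ≤ h * h * (h * h) + ε • (h * h) - ‖a - c‖ • (h * h) := by
        rw [sub_smul, add_sub_assoc]
        exact le_add_of_nonneg_left hsq
    _ ≤ h * a * h - h * (a - c) * h := by rw [hhah]; exact sub_le_sub_left hle _
    _ = h * c * h := by noncomm_ring

section Unital

variable {B : Type*} [CStarAlgebra B]

lemma cfc_mul_mul_cfc (f : ℝ → ℝ) (P : B) (hf : ContinuousOn f (spectrum ℝ P))
    (hP : IsSelfAdjoint P := by cfc_tac) :
    cfc f P * P * cfc f P = cfc (fun t => f t * t * f t) P := by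
  rw [cfc_mul (fun t => f t * t) f P (hf.mul continuousOn_id) hf,
    cfc_mul f (fun t => t) P hf continuousOn_id, cfc_id' ℝ P]

variable [PartialOrder B] [StarOrderedRing B]

lemma norm_mul_cfc_mul_le {H P : B} (hH : IsSelfAdjoint H) (hHP : H * H ≤ P) {θ : ℝ → ℝ}
    (hθ : ContinuousOn θ (spectrum ℝ P)) (hθ0 : ∀ t ∈ spectrum ℝ P, 0 ≤ θ t) {c : ℝ} (hc : 0 ≤ c)
    (hθc : ∀ t ∈ spectrum ℝ P, θ t * t ≤ c) : ‖H * cfc θ P * H‖ ≤ c := by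
  have hP : 0 ≤ P := hH.mul_self_nonneg.trans hHP
  have hr : ContinuousOn (fun t => √(θ t)) (spectrum ℝ P) :=
    Real.continuous_sqrt.comp_continuousOn hθ
  set r := cfc (fun t => √(θ t)) P
  have hr_sa : IsSelfAdjoint r := cfc_predicate _ P
  have hrr : r * r = cfc θ P := by
    rw [← cfc_mul _ _ P hr hr]
    exact cfc_congr fun t ht => Real.mul_self_sqrt (hθ0 t ht)
  have hrPr : r * P * r = cfc (fun t => θ t * t) P := by
    rw [cfc_mul_mul_cfc _ P hr]
    exact cfc_congr fun t ht => by rw [mul_right_comm, Real.mul_self_sqrt (hθ0 t ht)]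
  calc ‖H * cfc θ P * H‖ = ‖star (r * H) * (r * H)‖ := by
        rw [← hrr, star_mul, hr_sa.star_eq, hH.star_eq]; simp only [mul_assoc]
    _ = ‖star r * (H * H) * r‖ := by
        rw [CStarRing.norm_star_mul_self, ← CStarRing.norm_self_mul_star, star_mul, hr_sa.star_eq,
          hH.star_eq]; simp only [mul_assoc]
    _ ≤ ‖star r * P * r‖ := CStarAlgebra.norm_le_norm_of_nonneg_of_le
        (star_left_conjugate_nonneg hH.mul_self_nonneg r) (star_left_conjugate_le_conjugate hHP r)
    _ ≤ c := by
        rw [hr_sa.star_eq, hrPr]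
        refine norm_cfc_le hc fun t ht => ?_
        rw [Real.norm_eq_abs,
          abs_of_nonneg (mul_nonneg (hθ0 t ht) (spectrum_nonneg_of_nonneg hP ht))]
        exact hθc t ht

lemma continuousOn_inv_sqrt_add {P : B} (hP : 0 ≤ P) {s : ℝ} (hs : 0 < s) :
    ContinuousOn (fun t => (√(t + s))⁻¹) (spectrum ℝ P) :=
  (Real.continuous_sqrt.comp_continuousOn (continuousOn_id.add continuousOn_const)).inv₀
    fun _ ht =>
      (Real.sqrt_pos.2 (add_pos_of_nonneg_of_pos (spectrum_nonneg_of_nonneg hP ht) hs)).ne'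

/-- As `s → 0` these converge to some `x` with `x⋆x = h²` as soon as `h² ≤ w⋆w`. Since
`(t + s)^(-1/2)` does not vanish at `0`, this needs a unit; a non-unital algebra passes to its
unitization. -/
noncomputable def factorApprox (w h : B) (s : ℝ) : B :=
  w * cfc (fun t => (√(t + s))⁻¹) (star w * w) * h

lemma norm_star_factorApprox_mul_self_sub_le {w h : B} (hh : IsSelfAdjoint h)
    (hle : h * h ≤ star w * w) {s : ℝ} (hs : 0 < s) :
    ‖star (factorApprox w h s) * factorApprox w h s - h * h‖ ≤ s := by
  set P := star w * w
  have hP : 0 ≤ P := star_mul_self_nonneg w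
  have hσ : ∀ t ∈ spectrum ℝ P, 0 < t + s := fun t ht =>
    add_pos_of_nonneg_of_pos (spectrum_nonneg_of_nonneg hP ht) hs
  have hφ := continuousOn_inv_sqrt_add hP hs
  set R := cfc (fun t => (√(t + s))⁻¹) P
  have hR : IsSelfAdjoint R := cfc_predicate _ P
  have hθ : cfc (fun t => s * (t + s)⁻¹) P = 1 - R * P * R := by
    rw [cfc_mul_mul_cfc _ P hφ, ← cfc_const_one ℝ P, ← cfc_sub (fun _ => 1)
      (fun t => (√(t + s))⁻¹ * t * (√(t + s))⁻¹) P continuousOn_const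
      ((hφ.mul continuousOn_id).mul hφ)]
    refine cfc_congr fun t ht => ?_
    have := hσ t ht
    field_simp
    rw [Real.sq_sqrt this.le]
    ring
  have hX : star (factorApprox w h s) * factorApprox w h s = h * (R * P * R) * h := by
    simp only [factorApprox, star_mul, hR.star_eq, hh.star_eq, mul_assoc, P, R]
  have hdiff : h * h - h * (R * P * R) * h = h * cfc (fun t => s * (t + s)⁻¹) P * h := by
    rw [hθ, mul_sub, sub_mul, mul_one]
  rw [norm_sub_rev, hX, hdiff]
  have hθc : ContinuousOn (fun t => s * (t + s)⁻¹) (spectrum ℝ P) :=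
    continuousOn_const.mul <|
      (continuousOn_id.add continuousOn_const).inv₀ fun t ht => (hσ t ht).ne'
  refine norm_mul_cfc_mul_le hh hle hθc (fun t ht => ?_) hs.le fun t ht => ?_
  · have := hσ t ht
    positivity
  · rw [mul_assoc, mul_comm _ t, ← div_eq_mul_inv]
    exact mul_le_of_le_one_right hs.le (div_le_one_of_le₀ (by linarith [hσ t ht]) (hσ t ht).le)

lemma norm_factorApprox_sub_le {w h : B} (hh : IsSelfAdjoint h) (hle : h * h ≤ star w * w)
    {s s' : ℝ} (hs : 0 < s) (hs' : 0 < s') :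
    ‖factorApprox w h s - factorApprox w h s'‖ ≤ √(max s s') := by
  set P := star w * w
  have hP : 0 ≤ P := star_mul_self_nonneg w
  have hφ := continuousOn_inv_sqrt_add hP hs
  have hφ' := continuousOn_inv_sqrt_add hP hs'
  set f := fun t => (√(t + s))⁻¹ - (√(t + s'))⁻¹
  have hf : ContinuousOn f (spectrum ℝ P) := hφ.sub hφ'
  set D := cfc f P
  have hD : IsSelfAdjoint D := cfc_predicate _ P
  have hsub : factorApprox w h s - factorApprox w h s' = w * D * h := by
    simp only [factorApprox, D, f, cfc_sub _ _ P hφ hφ', mul_sub, sub_mul, P]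
  have hsq : ‖w * D * h‖ ^ 2 = ‖h * cfc (fun t => f t * t * f t) P * h‖ := by
    rw [sq, ← CStarRing.norm_star_mul_self, ← cfc_mul_mul_cfc f P hf]
    simp only [star_mul, hD.star_eq, hh.star_eq, mul_assoc, P, D]
  rw [hsub]
  refine Real.le_sqrt_of_sq_le (hsq ▸ norm_mul_cfc_mul_le (θ := fun t => f t * t * f t) hh hle
    ((hf.mul continuousOn_id).mul hf) (fun t ht => ?_) (le_max_of_le_left hs.le) fun t ht => ?_)
  · rw [mul_right_comm]
    exact mul_nonneg (mul_self_nonneg _) (spectrum_nonneg_of_nonneg hP ht)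
  · rw [show f t * t * f t * t = (f t * t) ^ 2 by ring]
    exact sq_inv_sqrt_add_sub_inv_sqrt_add_mul_le (spectrum_nonneg_of_nonneg hP ht) hs hs'

end Unital

lemma Unitization.inr_mul_mul_inr {R E : Type*} [CommRing R] [NonUnitalRing E] [Module R E]
    [IsScalarTower R E E] [SMulCommClass R E E] (w h : E) (r : Unitization R E) :
    (w : Unitization R E) * r * h = ↑(w * (r.fst • h + r.snd * h)) := by
  ext <;> simp [mul_add, mul_assoc, mul_smul_comm]

lemma exists_mem_closure_range_mul_star_mul_self_eq {w h : A} (hh : IsSelfAdjoint h)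
    (hle : h * h ≤ star w * w) : ∃ x ∈ closure (Set.range (w * ·)), star x * x = h * h := by
  have hh' : IsSelfAdjoint (h : Unitization ℂ A) := hh.inr ℂ
  have hle' : (h : Unitization ℂ A) * h ≤ star (w : Unitization ℂ A) * w := by
    rwa [← Unitization.inr_star, ← Unitization.inr_mul, ← Unitization.inr_mul,
      Unitization.inr_le_iff _ _ hh.mul_self_nonneg.isSelfAdjoint (.star_mul_self w)]
  set s : ℕ → ℝ := fun n => 1 / (n + 1)
  have hs (n : ℕ) : 0 < s n := by positivity
  have hs_anti : Antitone s := fun n m hnm => one_div_le_one_div_of_le (by positivity) (by gcongr)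
  set X := fun n => factorApprox (w : Unitization ℂ A) h (s n)
  have hX (n : ℕ) : ∃ z, ((w * z : A) : Unitization ℂ A) = X n :=
    ⟨_, (Unitization.inr_mul_mul_inr w h _).symm⟩
  choose z hz using hX
  have hcauchy : CauchySeq fun n => w * z n := by
    refine cauchySeq_of_le_tendsto_0 (fun N => √(s N)) (fun n m N hn hm => ?_) ?_
    · rw [← (Unitization.isometry_inr (𝕜 := ℂ)).dist_eq, hz, hz, dist_eq_norm]
      refine (norm_factorApprox_sub_le hh' hle' (hs n) (hs m)).trans (Real.sqrt_le_sqrt ?_)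
      exact max_le (hs_anti hn) (hs_anti hm)
    · simpa [s] using (tendsto_one_div_add_atTop_nhds_zero_nat (𝕜 := ℝ)).sqrt
  obtain ⟨x, hx⟩ := cauchySeq_tendsto_of_complete hcauchy
  refine ⟨x, mem_closure_of_tendsto hx (Eventually.of_forall fun n => ⟨z n, rfl⟩),
    tendsto_nhds_unique (hx.star.mul hx) ?_⟩
  rw [tendsto_iff_norm_sub_tendsto_zero]
  refine squeeze_zero (fun _ => norm_nonneg _) (fun n => ?_) tendsto_one_div_add_atTop_nhds_zero_nat
  rw [← Unitization.norm_inr (𝕜 := ℂ), Unitization.inr_sub, Unitization.inr_mul,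
    Unitization.inr_star, hz, Unitization.inr_mul]
  exact norm_star_factorApprox_mul_self_sub_le hh' hle' (hs n)

lemma CuntzLE.exists_cutdown_eq_star_mul_self {a b : A} (ha : IsSelfAdjoint a) (hb : 0 ≤ b)
    (hab : CuntzLE a b) {ε : ℝ} (hε : 0 < ε) :
    ∃ x : A, cfcₙ (fun t : ℝ => max (t - ε) 0) a = star x * x ∧ x * star x ∈ her b := by
  obtain ⟨_, ⟨d, rfl⟩, hd⟩ := Metric.mem_closure_iff.1 (cuntzLE_iff_mem_closure.1 hab) ε hε
  rw [dist_eq_norm] at hd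
  set c := star d * b * d
  set δ := ε - ‖a - c‖
  have hδ : 0 < δ := sub_pos.2 hd
  set h := cfcₙ (fun t : ℝ => √(max (t - ε) 0)) a
  have hh : IsSelfAdjoint h := cfcₙ_predicate _ a
  have hhh := cfcₙ_sqrt_max_sub_mul_self (a := a) hε.le
  have hδhh : δ • (h * h) ≤ h * c * h := by
    refine smul_mul_self_le_mul_mul hh (ha.sub (hb.isSelfAdjoint.conjugate' d)) ?_
    rw [hhh]
    exact cfcₙ_sqrt_max_sub_mul_mul ha hε.le
  set w := (√δ)⁻¹ • (CFC.sqrt b * (d * h)) with hw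
  have hww : star w * w = δ⁻¹ • (h * c * h) := by
    have hsq : star (CFC.sqrt b * (d * h)) * (CFC.sqrt b * (d * h)) = h * c * h := by
      rw [star_mul, (CFC.sqrt_nonneg b).isSelfAdjoint.star_eq, mul_assoc, ← mul_assoc (CFC.sqrt b),
        CFC.sqrt_mul_sqrt_self b, star_mul, hh.star_eq]
      simp only [c, mul_assoc]
    rw [hw, star_smul, star_trivial, smul_mul_smul_comm, hsq, ← mul_inv,
      Real.mul_self_sqrt hδ.le]
  have hle : h * h ≤ star w * w := by
    rw [hww, ← inv_smul_smul₀ hδ.ne' (h * h)]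
    exact smul_le_smul_of_nonneg_left hδhh (inv_nonneg.2 hδ.le)
  obtain ⟨x, hxw, hx⟩ := exists_mem_closure_range_mul_star_mul_self_eq hh hle
  refine ⟨x, by rw [hx, hhh], mul_star_mem_her_of_mem_closure hb.isSelfAdjoint
    (closure_range_mul_subset ?_ hxw)⟩
  rw [hw, ← mul_smul_comm]
  exact mul_mem_closure_range_mul (sqrt_mem_closure_range_mul hb) _

lemma cuntzLE_of_forall_cutdown_eq_star_mul_self {a b : A} (ha : 0 ≤ a) (hb : 0 ≤ b)
    (H : ∀ ε : ℝ, 0 < ε → ∃ x : A,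
      cfcₙ (fun t : ℝ => max (t - ε) 0) a = star x * x ∧ x * star x ∈ her b) :
    CuntzLE a b := by
  refine cuntzLE_of_tendsto (tendsto_cfcₙ_max_sub_nhdsGT_zero ha) ?_
  filter_upwards [self_mem_nhdsWithin] with ε hε
  obtain ⟨x, hx, hxb⟩ := H ε hε
  exact hx ▸ cuntzLE_star_mul_self_of_mul_star_mem_her hb hxb

/-- For positive `a, b` in a C*-algebra, `a ≾ b` if and only if for every `ε > 0` there is
`x ∈ A` with `(a − ε)₊ = x*x` and `xx* ∈ her(b)`. -/
theorem cuntzLE_iff_cutdown (a b : A) (ha : 0 ≤ a) (hb : 0 ≤ b) :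
    CuntzLE a b ↔ ∀ ε : ℝ, 0 < ε → ∃ x : A,
      cfcₙ (fun t : ℝ => max (t - ε) 0) a = star x * x ∧ x * star x ∈ her b :=
  ⟨fun hab _ hε => hab.exists_cutdown_eq_star_mul_self ha.isSelfAdjoint hb hε,
    cuntzLE_of_forall_cutdown_eq_star_mul_self ha hb⟩
end

section
/- Let X be a compact Hausdorff space, let p, q ∈ C(X, 𝒦) be projections with [p] ≤ n[1_X] in the Cuntz/Murray–von Neumann sense, and suppose there exists v ∈ q C(X,𝒦) p such that v(x) ≠ 0 for all x ∈ X. Then [1_X] ≤ n[q], i.e., the trivial line bundle embeds in the n-fold direct sum of the bundle of q. -/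
/-- `ℓ²`: the Hilbert space of square-summable complex sequences. -/
noncomputable abbrev HilbL2 : Type := lp (fun _ : ℕ => ℂ) 2

/-- Bounded operators on `ℓ²`. -/
noncomputable abbrev BL2 : Type := HilbL2 →L[ℂ] HilbL2

variable {X : Type*} [TopologicalSpace X]

/-- A continuous `B(ℓ²)`-valued function with compact operator values, i.e. an element
of `C(X, 𝒦)`. -/
def CompactValued (f : C(X, BL2)) : Prop := ∀ x, IsCompactOperator (f x)

/-- `[p] ≤ n[q]`: `p` is Murray–von Neumann subequivalent, within `C(X, 𝒦)`, to a direct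
sum of `n` copies of `q`; witnessed by a column `v = (v₁, …, vₙ)` with `Σ vᵢ* vᵢ = p` and
`q vᵢ = vᵢ`. -/
def MvNLE (p : C(X, BL2)) (n : ℕ) (q : C(X, BL2)) : Prop :=
  ∃ v : Fin n → C(X, BL2), (∀ i, CompactValued (v i)) ∧
    (∀ x, ∑ i, star ((v i) x) * (v i) x = p x) ∧
    (∀ i x, q x * (v i) x = (v i) x)

/-!
Write the rank-one projection as `e = |ξ⟩⟨ξ|` and let `w = (wᵢ)` witness `[p] ≤ n[e]`.
The operators `bᵢ = v wᵢ*` satisfy `bᵢ e = bᵢ`, hence `bᵢ* bᵢ = ‖bᵢ ξ‖² e`, and `q bᵢ = bᵢ`.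
The column `b` vanishes nowhere, because `v = q v p = q Σ bᵢ wᵢ`. So `Λ = Σ ‖bᵢ ξ‖²` is a
continuous positive function, and `Λ^(-1/2) b` witnesses `[e] ≤ n[q]`.
-/

open InnerProductSpace ContinuousLinearMap

section RankOne

variable {𝕜 E : Type*} [RCLike 𝕜] [NormedAddCommGroup E] [InnerProductSpace 𝕜 E]

theorem isCompactOperator_rankOne (x y : E) : IsCompactOperator (rankOne 𝕜 x y) := by
  rw [rankOne_def', coe_comp]
  exact (isCompactOperator_of_locallyCompactSpace_rng _).comp_clm _

theorem IsStarProjection.exists_eq_rankOne [CompleteSpace E] {e : E →L[𝕜] E}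
    (he : IsStarProjection e) (hrank : Module.finrank 𝕜 (LinearMap.range (e : E →ₗ[𝕜] E)) = 1) :
    ∃ ξ : E, e = rankOne 𝕜 ξ ξ := by
  obtain ⟨_, he⟩ := isStarProjection_iff_eq_starProjection_range.mp he
  have : FiniteDimensional 𝕜 e.range := .of_finrank_eq_succ hrank
  let b := (stdOrthonormalBasis 𝕜 e.range).reindex (finCongr hrank)
  refine ⟨b 0, he.trans ?_⟩
  rw [b.starProjection_eq_sum_rankOne, Fin.sum_univ_one]

variable {ξ : E} {b : E →L[𝕜] E}

theorem eq_rankOne_of_mul_rankOne_eq (hb : b * rankOne 𝕜 ξ ξ = b) : b = rankOne 𝕜 (b ξ) ξ := by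
  conv_lhs => rw [← hb, mul_def, comp_rankOne]

theorem star_mul_self_eq_of_mul_rankOne_eq [CompleteSpace E] (hb : b * rankOne 𝕜 ξ ξ = b) :
    star b * b = ((‖b ξ‖ ^ 2 : ℝ) : 𝕜) • rankOne 𝕜 ξ ξ := by
  conv_lhs => rw [eq_rankOne_of_mul_rankOne_eq hb, star_eq_adjoint, adjoint_rankOne, mul_def,
    rankOne_comp_rankOne, inner_self_eq_norm_sq_to_K]
  norm_cast

end RankOne

theorem mvNLE_const_rankOne_of_column {n : ℕ} (ξ : HilbL2) (q : C(X, BL2))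
    (b : Fin n → C(X, BL2)) (hbξ : ∀ i x, b i x * rankOne ℂ ξ ξ = b i x)
    (hqb : ∀ i x, q x * b i x = b i x) (hb_ne : ∀ x, ∃ i, b i x ≠ 0) :
    MvNLE (ContinuousMap.const X (rankOne ℂ ξ ξ)) n q := by
  set Λ : X → ℝ := fun x => ∑ i, ‖b i x ξ‖ ^ 2
  have hΛ_pos (x : X) : 0 < Λ x := by
    obtain ⟨i, hi⟩ := hb_ne x
    refine Finset.sum_pos' (fun i _ => by positivity) ⟨i, Finset.mem_univ i, ?_⟩
    have : b i x ξ ≠ 0 := fun h => hi (by rw [eq_rankOne_of_mul_rankOne_eq (hbξ i x), h, map_zero,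
      zero_apply])
    positivity
  have hsum (x : X) : ∑ i, star (b i x) * b i x = (Λ x : ℂ) • rankOne ℂ ξ ξ := by
    simp only [star_mul_self_eq_of_mul_rankOne_eq (hbξ _ x), ← Finset.sum_smul, Λ]
    push_cast; rfl
  have hΛ_cont : Continuous Λ := by fun_prop
  let c : C(X, ℂ) := ⟨fun x => ((√(Λ x))⁻¹ : ℝ), by
    fun_prop (disch := exact fun x => (Real.sqrt_pos.2 (hΛ_pos x)).ne')⟩
  have hc (x : X) : star (c x) * c x * Λ x = 1 := by
    simp only [c, ContinuousMap.coe_mk, Complex.star_def, Complex.conj_ofReal]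
    norm_cast
    rw [← mul_inv, Real.mul_self_sqrt (hΛ_pos x).le, inv_mul_cancel₀ (hΛ_pos x).ne']
  refine ⟨fun i => c • b i, fun i x => ?_, fun x => ?_, fun i x => ?_⟩
  · rw [ContinuousMap.smul_apply', eq_rankOne_of_mul_rankOne_eq (hbξ i x), FunLike.coe_smul]
    exact (isCompactOperator_rankOne _ _).smul _
  · calc ∑ i, star ((c • b i) x) * (c • b i) x
        = (star (c x) * c x) • ∑ i, star (b i x) * b i x := by
          simp only [ContinuousMap.smul_apply', star_smul, smul_mul_smul_comm, Finset.smul_sum]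
      _ = rankOne ℂ ξ ξ := by rw [hsum, smul_smul, hc, one_smul]
  · simp only [ContinuousMap.smul_apply', mul_smul_comm, hqb]

theorem mvNLE_one_of_full_element_general
    (e : BL2) (he_proj : IsSelfAdjoint e ∧ e * e = e)
    (he_rank : Module.finrank ℂ (LinearMap.range (e : HilbL2 →ₗ[ℂ] HilbL2)) = 1)
    (p q : C(X, BL2))
    (hq : ∀ x, IsSelfAdjoint (q x) ∧ q x * q x = q x)
    (n : ℕ) (hpn : MvNLE p n (ContinuousMap.const X e))
    (v : C(X, BL2)) (hv : ∀ x, q x * v x * p x = v x)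
    (hvfull : ∀ x, v x ≠ 0) :
    MvNLE (ContinuousMap.const X e) n q := by
  obtain ⟨ξ, rfl⟩ := IsStarProjection.exists_eq_rankOne ⟨he_proj.2, he_proj.1⟩ he_rank
  obtain ⟨w, -, hw_sum, hw⟩ := hpn
  simp only [ContinuousMap.const_apply] at hw
  have hqv (x : X) : q x * v x = v x := by
    rw [← hv x, ← mul_assoc, ← mul_assoc, (hq x).2]
  refine mvNLE_const_rankOne_of_column ξ q (fun i => v * star (w i)) (fun i x => ?_)
    (fun i x => ?_) (fun x => ?_)
  · simp only [ContinuousMap.mul_apply, ContinuousMap.star_apply, mul_assoc]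
    rw [← he_proj.1.star_eq, ← star_mul, hw i x]
  · simp only [ContinuousMap.mul_apply, ContinuousMap.star_apply, ← mul_assoc, hqv]
  · by_contra! hb
    have hvp : v x * p x = 0 := by
      rw [← hw_sum x, Finset.mul_sum]
      refine Finset.sum_eq_zero fun i _ => ?_
      rw [← mul_assoc, show v x * star (w i x) = 0 from hb i, zero_mul]
    exact hvfull x (by rw [← hv x, mul_assoc, hvp, mul_zero])

/-- Let `X` be compact Hausdorff, `p, q` projections in `C(X, 𝒦)` with `[p] ≤ n[1_X]`,
where `1_X` is the constant rank-one projection.  If there is `v ∈ q C(X,𝒦) p` with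
`v(x) ≠ 0` for all `x`, then `[1_X] ≤ n[q]`. -/
theorem mvNLE_one_of_full_element
    [CompactSpace X] [T2Space X]
    (e : BL2) (he_proj : IsSelfAdjoint e ∧ e * e = e)
    (he_rank : Module.finrank ℂ (LinearMap.range (e : HilbL2 →ₗ[ℂ] HilbL2)) = 1)
    (p q : C(X, BL2))
    (hp : ∀ x, IsSelfAdjoint (p x) ∧ p x * p x = p x) (hpc : CompactValued p)
    (hq : ∀ x, IsSelfAdjoint (q x) ∧ q x * q x = q x) (hqc : CompactValued q)
    (n : ℕ) (hpn : MvNLE p n (ContinuousMap.const X e))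
    (v : C(X, BL2)) (hv : ∀ x, q x * v x * p x = v x)
    (hvfull : ∀ x, v x ≠ 0) :
    MvNLE (ContinuousMap.const X e) n q :=
  mvNLE_one_of_full_element_general e he_proj he_rank p q hq n hpn v hv hvfull
end

section
/- Let a be a selfadjoint n × n complex matrix with trace zero. Then there exists a diagonal matrix d unitarily equivalent to a and a permutation matrix u such that all partial sums of the diagonal entries of u d u* lie in the interval [−‖a‖, ‖a‖]. -/
open scoped Matrix.Norms.L2Operator

/-!
Diagonalize `a = U d U*`. The eigenvalues lie in `[-‖a‖, ‖a‖]` and sum to `0`, and such a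
family can be ordered greedily: if the current partial sum `s` is `≥ 0`, append a remaining
value `≤ 0`, which keeps the partial sum in `[-‖a‖, s]`; symmetrically if `s < 0`. The
induction carries the invariant `|s + (sum of the rest)| ≤ ‖a‖`, under which, when no
remaining value is `≤ 0`, any one of them can be appended.
-/

theorem Matrix.IsHermitian.abs_eigenvalues_le {n 𝕜 : Type*} [RCLike 𝕜] [Fintype n]
    [DecidableEq n] {A : Matrix n n 𝕜} (hA : A.IsHermitian) (i : n) :
    |hA.eigenvalues i| ≤ ‖A‖ := by
  -- makes the matrix algebra nontrivial, so that `‖1‖ = 1`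
  have : Nonempty n := ⟨i⟩
  have hmem : (hA.eigenvalues i : 𝕜) ∈ spectrum 𝕜 A :=
    hA.spectrum_eq_image_range ▸ ⟨_, Set.mem_range_self i, rfl⟩
  simpa using spectrum.norm_le_norm_of_mem hmem

section PartialSums

variable {α : Type*} [AddCommGroup α] [LinearOrder α] [IsOrderedAddMonoid α]

theorem exists_abs_add_le_of_abs_add_sum_le {ι : Type*} [Fintype ι] [Nonempty ι] {f : ι → α}
    {M s : α} (hf : ∀ i, |f i| ≤ M) (hs : |s| ≤ M) (hsum : |s + ∑ i, f i| ≤ M) :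
    ∃ i, |s + f i| ≤ M := by
  wlog hs0 : 0 ≤ s generalizing f s
  · have hsum' : |-s + ∑ i, (-f) i| ≤ M := by
      simpa only [Pi.neg_apply, Finset.sum_neg_distrib, ← neg_add, abs_neg] using hsum
    obtain ⟨i, hi⟩ := this (by simpa using hf) (by simpa using hs) hsum'
      (neg_nonneg.2 (not_le.1 hs0).le)
    exact ⟨i, by rwa [Pi.neg_apply, ← neg_add, abs_neg] at hi⟩
  by_cases hneg : ∃ i, f i ≤ 0
  · obtain ⟨i, hi⟩ := hneg
    exact ⟨i, abs_le.2 ⟨(neg_le_of_abs_le (hf i)).trans (le_add_of_nonneg_left hs0),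
      (add_le_of_nonpos_right hi).trans ((le_abs_self s).trans hs)⟩⟩
  · push Not at hneg
    obtain ⟨i⟩ := ‹Nonempty ι›
    have hfi : f i ≤ ∑ j, f j :=
      Finset.single_le_sum (fun j _ => (hneg j).le) (Finset.mem_univ i)
    exact ⟨i, abs_le.2
      ⟨(neg_nonpos.2 ((abs_nonneg s).trans hs)).trans (add_nonneg hs0 (hneg i).le),
        (add_le_add_right hfi s).trans ((le_abs_self _).trans hsum)⟩⟩

omit [LinearOrder α] [IsOrderedAddMonoid α] in
theorem Fin.sum_ite_val_lt_succ {n : ℕ} (g : Fin (n + 1) → α) (k : ℕ) :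
    (∑ i : Fin (n + 1), if (i : ℕ) < k + 1 then g i else 0) =
      g 0 + ∑ i : Fin n, if (i : ℕ) < k then g i.succ else 0 := by
  simp [Fin.sum_univ_succ]

theorem exists_perm_abs_add_partial_sums_le {n : ℕ} (f : Fin n → α) {M s : α}
    (hf : ∀ i, |f i| ≤ M) (hs : |s| ≤ M) (hsum : |s + ∑ i, f i| ≤ M) :
    ∃ σ : Equiv.Perm (Fin n), ∀ k : ℕ,
      |s + ∑ i : Fin n, if (i : ℕ) < k then f (σ i) else 0| ≤ M := by
  induction n generalizing s with
  | zero => exact ⟨1, fun _ => by simpa using hs⟩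
  | succ n ih =>
    obtain ⟨i, hi⟩ := exists_abs_add_le_of_abs_add_sum_le hf hs hsum
    set g := f ∘ Equiv.swap 0 i
    have hg0 : g 0 = f i := by simp [g]
    have hrest : (s + f i) + ∑ j : Fin n, g j.succ = s + ∑ j, f j := by
      rw [add_assoc, ← hg0, ← Fin.sum_univ_succ g]
      exact congrArg (s + ·) (Equiv.sum_comp _ f)
    obtain ⟨τ, hτ⟩ := ih (fun j => g j.succ) (fun j => hf _) hi (hrest ▸ hsum)
    refine ⟨Equiv.swap 0 i * Equiv.Perm.decomposeFin.symm (0, τ), ?_⟩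
    rintro (_ | k)
    · simpa using hs
    · rw [Fin.sum_ite_val_lt_succ, ← add_assoc]
      simpa [Equiv.Perm.decomposeFin_symm_apply_succ, g] using hτ k

end PartialSums

theorem Matrix.of_perm_mul_diagonal_mul_star_apply_self {m R : Type*} [Fintype m]
    [DecidableEq m] [Semiring R] [StarRing R] (σ : Equiv.Perm m) (c : m → R) (i : m) :
    ((of fun i j => if σ j = i then (1 : R) else 0) * diagonal c *
      star (of fun i j => if σ j = i then (1 : R) else 0)) i i = c (σ.symm i) := by
  simp [mul_apply, diagonal_apply, ← Equiv.eq_symm_apply, Finset.sum_ite_eq']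

/-- Let `a` be a selfadjoint `n × n` complex matrix with trace zero.  Then there is a
diagonal matrix `d` unitarily equivalent to `a` and a permutation matrix `u` such that
every partial sum of the diagonal entries of `u d u*` lies in `[−‖a‖, ‖a‖]` (the diagonal
entries are real, so this is expressed as `|partial sum| ≤ ‖a‖`). -/
theorem exists_diagonal_perm_partial_sums_bounded
    (n : ℕ) (a : Matrix (Fin n) (Fin n) ℂ)
    (ha : IsSelfAdjoint a) (htr : a.trace = 0) :
    ∃ (d : Matrix (Fin n) (Fin n) ℂ) (U : Matrix (Fin n) (Fin n) ℂ)
      (σ : Equiv.Perm (Fin n)),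
      d.IsDiag ∧ U ∈ Matrix.unitaryGroup (Fin n) ℂ ∧ a = U * d * star U ∧
      (let u : Matrix (Fin n) (Fin n) ℂ := Matrix.of fun i j => if σ j = i then 1 else 0;
        ∀ k : ℕ, ‖∑ i : Fin n,
          if (i : ℕ) < k then (u * d * star u) i i else 0‖ ≤ ‖a‖) := by
  have hA : a.IsHermitian := ha
  have hsum : ∑ i, hA.eigenvalues i = 0 := by
    have := hA.trace_eq_sum_eigenvalues.symm.trans htr
    rwa [← RCLike.ofReal_sum, RCLike.ofReal_eq_zero] at this
  obtain ⟨π, hπ⟩ := exists_perm_abs_add_partial_sums_le hA.eigenvalues (s := 0)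
    hA.abs_eigenvalues_le (by simp) (by simp [hsum])
  refine ⟨_, _, π.symm, Matrix.isDiag_diagonal _, hA.eigenvectorUnitary.2, hA.spectral_theorem,
    fun k => ?_⟩
  simp only [Matrix.of_perm_mul_diagonal_mul_star_apply_self, Equiv.symm_symm,
    Function.comp_apply]
  rw [← RCLike.ofReal_zero]
  simp only [← apply_ite (RCLike.ofReal : ℝ → ℂ), ← RCLike.ofReal_sum, RCLike.norm_ofReal]
  simpa using hπ k
end
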